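/- arXiv:1706.05671 — 5 statements merged into one kernel-verified Lean document; each statement's English description precedes it below -/
import Mathlib

section
/- Suppose α > 3. Then the values converge rapidly: there exists a constant M ≥ 0 such that Φ(x(t)) − inf Φ ≤ M / t² for all t ≥ t₀, i.e. Φ(x(t)) − inf Φ = O(1/t²) as t → +∞. -/
/-!
With `x*` a minimizer, the energy
`E(t) = t² (Φ(x(t)) - Φ(x*)) + ½ ‖2 (x(t) - x*) + t ẋ(t)‖² + (α - 3) ‖x(t) - x*‖²`
has derivative `2t (Φ(x) - Φ(x*) + ⟪∇Φ(x), x* - x⟫) + (3 - α) t ‖ẋ‖²` along `(AVD)_α`, and both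
terms are nonpositive for `t > 0` and `α ≥ 3`, the first by the gradient inequality of convex
functions. Hence `t² (Φ(x(t)) - Φ(x*)) ≤ E(t) ≤ E(t₀)`.
-/

open Set
open scoped RealInnerProductSpace

theorem ConvexOn.le_sub_of_hasFDerivAt {E : Type*} [NormedAddCommGroup E] [NormedSpace ℝ E]
    {f : E → ℝ} {f' : E →L[ℝ] ℝ} {x : E} (hf : ConvexOn ℝ univ f) (hf' : HasFDerivAt f f' x)
    (y : E) : f' (y - x) ≤ f y - f x := by
  have hline : ConvexOn ℝ univ (f ∘ AffineMap.lineMap (k := ℝ) x y) := by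
    simpa using hf.comp_affineMap (AffineMap.lineMap (k := ℝ) x y)
  have hderiv : HasDerivAt (f ∘ AffineMap.lineMap (k := ℝ) x y) (f' (y - x)) 0 := by
    simpa using hf'.comp_hasDerivAt_of_eq 0 AffineMap.hasDerivAt_lineMap (by simp)
  simpa [slope_def_field] using
    hline.le_slope_of_hasDerivAt (mem_univ 0) (mem_univ 1) zero_lt_one hderiv

section

variable {H : Type*} [NormedAddCommGroup H] [InnerProductSpace ℝ H]

noncomputable def avdEnergy (Φ : H → ℝ) (α : ℝ) (xstar : H) (x v : ℝ → H) (t : ℝ) : ℝ :=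
  t ^ 2 * (Φ (x t) - Φ xstar) + ‖(2 : ℝ) • (x t - xstar) + t • v t‖ ^ 2 / 2
    + (α - 3) * ‖x t - xstar‖ ^ 2

theorem sq_mul_sub_le_avdEnergy {Φ : H → ℝ} {α : ℝ} (hα : 3 ≤ α) (xstar : H) (x v : ℝ → H)
    (t : ℝ) : t ^ 2 * (Φ (x t) - Φ xstar) ≤ avdEnergy Φ α xstar x v t := by
  have : 0 ≤ (α - 3) * ‖x t - xstar‖ ^ 2 := mul_nonneg (by linarith) (sq_nonneg _)
  unfold avdEnergy
  linarith [sq_nonneg ‖(2 : ℝ) • (x t - xstar) + t • v t‖]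

variable [CompleteSpace H]

theorem ConvexOn.inner_gradient_le {f : H → ℝ} {g x : H} (hf : ConvexOn ℝ univ f)
    (hg : HasGradientAt f g x) (y : H) : ⟪g, y - x⟫ ≤ f y - f x := by
  simpa using hf.le_sub_of_hasFDerivAt hg.hasFDerivAt y

theorem hasDerivAt_avdEnergy {Φ : H → ℝ} {α : ℝ} {xstar g a : H} {x v : ℝ → H} {t : ℝ}
    (ht : t ≠ 0) (hx : HasDerivAt x (v t) t) (hv : HasDerivAt v a t)
    (hΦ : HasGradientAt Φ g (x t)) (hode : a + (α / t) • v t + g = 0) :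
    HasDerivAt (avdEnergy Φ α xstar x v)
      (2 * t * (Φ (x t) - Φ xstar + ⟪g, xstar - x t⟫) + (3 - α) * t * ‖v t‖ ^ 2) t := by
  have hta : t • a = -(α • v t) - t • g := by
    have h := congrArg (t • ·) hode
    simp only [smul_add, smul_smul, mul_div_cancel₀ α ht, smul_zero] at h
    linear_combination (norm := module) h
  have hdist : HasDerivAt (fun s ↦ x s - xstar) (v t) t := hx.sub_const xstar
  have hw : HasDerivAt (fun s ↦ (2 : ℝ) • (x s - xstar) + s • v s)
      ((2 : ℝ) • v t + (t • a + (1 : ℝ) • v t)) t :=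
    (hdist.const_smul 2).add ((hasDerivAt_id t).smul hv)
  have hΦx : HasDerivAt (fun s ↦ Φ (x s)) ⟪g, v t⟫ t :=
    hΦ.hasFDerivAt.comp_hasDerivAt t hx
  refine ((((hasDerivAt_pow 2 t).mul (hΦx.sub_const (Φ xstar))).add
    (hw.norm_sq.div_const 2)).add (hdist.norm_sq.const_mul (α - 3))).congr_deriv ?_
  rw [hta]
  simp only [inner_add_left, inner_add_right, inner_sub_left, inner_sub_right, inner_neg_right,
    real_inner_smul_right, real_inner_comm, one_smul, real_inner_self_eq_norm_sq]
  ring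

theorem antitoneOn_avdEnergy {Φ : H → ℝ} (hΦconv : ConvexOn ℝ univ Φ)
    (hΦ : Differentiable ℝ Φ) {α t₀ : ℝ} (hα : 3 ≤ α) (ht₀ : 0 < t₀) (xstar : H)
    {x v a : ℝ → H} (hx : ∀ t ∈ Ici t₀, HasDerivAt x (v t) t)
    (hv : ∀ t ∈ Ici t₀, HasDerivAt v (a t) t)
    (hode : ∀ t ∈ Ici t₀, a t + (α / t) • v t + gradient Φ (x t) = 0) :
    AntitoneOn (avdEnergy Φ α xstar x v) (Ici t₀) := by
  have hE (t : ℝ) (ht : t ∈ Ici t₀) := hasDerivAt_avdEnergy (xstar := xstar)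
    (ht₀.trans_le ht).ne' (hx t ht) (hv t ht) (hΦ (x t)).hasGradientAt (hode t ht)
  refine antitoneOn_of_hasDerivWithinAt_nonpos (convex_Ici t₀)
    (fun t ht ↦ (hE t ht).continuousAt.continuousWithinAt)
    (fun t ht ↦ (hE t (interior_subset ht)).hasDerivWithinAt) fun t ht ↦ ?_
  rw [interior_Ici, mem_Ioi] at ht
  have htpos : 0 < t := ht₀.trans ht
  have hpot : 2 * t * (Φ (x t) - Φ xstar + ⟪gradient Φ (x t), xstar - x t⟫) ≤ 0 :=
    mul_nonpos_of_nonneg_of_nonpos (mul_pos two_pos htpos).le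
      (by linarith [hΦconv.inner_gradient_le (hΦ (x t)).hasGradientAt xstar])
  have hkin : (3 - α) * t * ‖v t‖ ^ 2 ≤ 0 :=
    mul_nonpos_of_nonpos_of_nonneg (mul_nonpos_of_nonpos_of_nonneg (by linarith) htpos.le)
      (sq_nonneg _)
  exact add_nonpos hpot hkin

end

/-- for `α > 3`, the values converge at rate `O(1/t²)` along any
solution of `(AVD)_α : ẍ(t) + (α/t)ẋ(t) + ∇Φ(x(t)) = 0`. -/
theorem stmt_0
    {H : Type*} [NormedAddCommGroup H] [InnerProductSpace ℝ H] [CompleteSpace H]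
    (Φ : H → ℝ) (hΦconv : ConvexOn ℝ Set.univ Φ) (hΦC1 : ContDiff ℝ 1 Φ)
    (xstar : H) (hxstar : ∀ y : H, Φ xstar ≤ Φ y)
    (α t₀ : ℝ) (hα : 3 < α) (ht₀ : 0 < t₀)
    (x : ℝ → H) (hx : ContDiff ℝ 2 x)
    (hode : ∀ t : ℝ, t₀ ≤ t →
      deriv (deriv x) t + (α / t) • deriv x t + gradient Φ (x t) = 0) :
    ∃ M : ℝ, 0 ≤ M ∧ ∀ t : ℝ, t₀ ≤ t → Φ (x t) - Φ xstar ≤ M / t ^ 2 := by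
  set E := avdEnergy Φ α xstar x (deriv x)
  have hanti : AntitoneOn E (Ici t₀) :=
    antitoneOn_avdEnergy hΦconv (hΦC1.differentiable one_ne_zero) hα.le ht₀ xstar
      (fun t _ ↦ (hx.differentiable two_ne_zero t).hasDerivAt)
      (fun t _ ↦ (hx.differentiable_deriv_two t).hasDerivAt) hode
  have hgap (t : ℝ) : 0 ≤ Φ (x t) - Φ xstar := sub_nonneg.2 (hxstar (x t))
  refine ⟨E t₀, (mul_nonneg (sq_nonneg t₀) (hgap t₀)).trans
    (sq_mul_sub_le_avdEnergy hα.le xstar x _ t₀), fun t ht ↦ ?_⟩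
  rw [le_div_iff₀ (pow_pos (ht₀.trans_le ht) 2)]
  calc (Φ (x t) - Φ xstar) * t ^ 2 = t ^ 2 * (Φ (x t) - Φ xstar) := mul_comm _ _
    _ ≤ E t := sq_mul_sub_le_avdEnergy hα.le xstar x _ t
    _ ≤ E t₀ := hanti self_mem_Ici ht ht
end

section
/- (Integral estimate of the values.) (i) If α > 3, then ∫_{t₀}^{+∞} t·(Φ(x(t)) − inf Φ) dt < +∞. (ii) If α ≤ 3, then for every real p with p < (2α/3) − 1 one has ∫_{t₀}^{+∞} t^p·(Φ(x(t)) − inf Φ) dt < +∞; in particular, for α = 3, ∫_{t₀}^{+∞} t^p·(Φ(x(t)) − inf Φ) dt < +∞ for all p < 1. -/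
/-!
Lyapunov argument. Fix `p ≤ 1` with `p < 2α/3 - 1`, put `c = α - (p + 1)/2` and
`d = c (α - p - c) ≥ 0`, and consider
`E(t) = t^(p+1) (Φ(x t) - Φ x⋆) + ½ t^(p-1) ‖c (x t - x⋆) + t ẋ t‖² + ½ d t^(p-1) ‖x t - x⋆‖²`.
Along `(AVD)_α`, `d` cancels the cross terms `⟪x t - x⋆, ẋ t⟫` in `E'`, and the convexity inequality
`Φ(x t) - Φ x⋆ ≤ ⟪∇Φ(x t), x t - x⋆⟫` leaves `E' + (c - p - 1) t^p (Φ(x t) - Φ x⋆) ≤ 0` with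
`c - p - 1 > 0`. Since `E ≥ 0`, integrating gives a uniform bound on `∫_{t₀}^T t^p (Φ(x t) - Φ x⋆)`.
Part (i) is the case `p = 1`.
-/

open Set MeasureTheory Filter
open scoped RealInnerProductSpace

section

variable {H : Type*} [NormedAddCommGroup H] [InnerProductSpace ℝ H]

theorem ConvexOn.inner_le_sub_of_hasGradientAt [CompleteSpace H] {Φ : H → ℝ} {g y : H}
    (hΦ : ConvexOn ℝ univ Φ) (hg : HasGradientAt Φ g y) (z : H) :
    ⟪g, z - y⟫ ≤ Φ z - Φ y := by
  let ℓ : ℝ →ᵃ[ℝ] H := AffineMap.lineMap y z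
  have hd : HasDerivAt (Φ ∘ ℓ) ⟪g, z - y⟫ 0 := by
    simpa using hg.hasFDerivAt.comp_hasDerivAt_of_eq (0 : ℝ) AffineMap.hasDerivAt_lineMap
      (by simp)
  simpa [slope, ℓ] using
    (hΦ.comp_affineMap ℓ).le_slope_of_hasDerivAt (mem_univ 0) (mem_univ 1) one_pos hd

theorem integrableOn_Ioi_of_hasDerivAt_add_le {f E E' : ℝ → ℝ} {a m : ℝ} (hm : 0 < m)
    (hf : ContinuousOn f (Ici a)) (hf0 : ∀ t ∈ Ici a, 0 ≤ f t)
    (hE : ∀ t ∈ Ici a, HasDerivAt E (E' t) t) (hE0 : ∀ t ∈ Ici a, 0 ≤ E t)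
    (hEf : ∀ t ∈ Ioi a, E' t + m * f t ≤ 0) : IntegrableOn f (Ioi a) := by
  have hfi : ∀ b, IntegrableOn f (Icc a b) := fun b =>
    (hf.mono Icc_subset_Ici_self).integrableOn_Icc
  refine integrableOn_Ioi_of_intervalIntegral_norm_bounded (E a / m) a
    (fun b => (hfi b).mono_set Ioc_subset_Icc_self) tendsto_id ?_
  filter_upwards [eventually_ge_atTop a] with b hab
  have hnorm : ∫ t in a..b, ‖f t‖ = ∫ t in a..b, f t :=
    intervalIntegral.integral_congr fun t ht =>
      Real.norm_of_nonneg (hf0 t (by rw [uIcc_of_le hab] at ht; exact ht.1))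
  have hdecay : ∫ t in a..b, m * f t ≤ (-E) b - (-E) a :=
    intervalIntegral.integral_le_sub_of_hasDeriv_right_of_le hab
      (fun t ht => (hE t ht.1).continuousAt.continuousWithinAt.neg)
      (fun t ht => (hE t ht.1.le).neg.hasDerivWithinAt) ((hfi b).const_mul m)
      (fun t ht => by linarith [hEf t ht.1])
  rw [intervalIntegral.integral_const_mul, Pi.neg_apply, Pi.neg_apply] at hdecay
  rw [hnorm, le_div_iff₀ hm]
  linarith [hE0 b hab]

namespace AVD

/-- The Lyapunov function of the argument is `t ^ (p - 1) * energy Φ x⋆ x c d t`. -/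
noncomputable def energy (Φ : H → ℝ) (xstar : H) (x : ℝ → H) (c d t : ℝ) : ℝ :=
  t ^ 2 * (Φ (x t) - Φ xstar) + ‖c • (x t - xstar) + t • deriv x t‖ ^ 2 / 2
    + d / 2 * ‖x t - xstar‖ ^ 2

noncomputable def energyDeriv [CompleteSpace H] (Φ : H → ℝ) (xstar : H) (x : ℝ → H) (c d t : ℝ) :
    ℝ :=
  2 * t * (Φ (x t) - Φ xstar) + t ^ 2 * ⟪gradient Φ (x t), deriv x t⟫
    + ⟪c • (x t - xstar) + t • deriv x t, (c + 1) • deriv x t + t • deriv (deriv x) t⟫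
    + d * ⟪x t - xstar, deriv x t⟫

theorem energy_nonneg {Φ : H → ℝ} {xstar : H} (hxstar : ∀ y, Φ xstar ≤ Φ y) (x : ℝ → H)
    {d : ℝ} (hd : 0 ≤ d) (c t : ℝ) : 0 ≤ energy Φ xstar x c d t := by
  have := sub_nonneg.2 (hxstar (x t))
  unfold energy
  positivity

theorem hasDerivAt_energy [CompleteSpace H] {Φ : H → ℝ} (xstar : H) {x : ℝ → H} (c d : ℝ)
    {t : ℝ} (hΦ : DifferentiableAt ℝ Φ (x t)) (hx : DifferentiableAt ℝ x t)
    (hx' : DifferentiableAt ℝ (deriv x) t) :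
    HasDerivAt (energy Φ xstar x c d) (energyDeriv Φ xstar x c d t) t := by
  have hu : HasDerivAt (fun s => x s - xstar) (deriv x t) t := hx.hasDerivAt.sub_const xstar
  have hF : HasDerivAt (fun s => Φ (x s) - Φ xstar) ⟪gradient Φ (x t), deriv x t⟫ t := by
    simpa using (hΦ.hasGradientAt.hasFDerivAt.comp_hasDerivAt t hx.hasDerivAt).sub_const (Φ xstar)
  have hw : HasDerivAt (fun s => c • (x s - xstar) + s • deriv x s)
      ((c + 1) • deriv x t + t • deriv (deriv x) t) t :=
    ((hu.const_smul c).add ((hasDerivAt_id t).smul hx'.hasDerivAt)).congr_deriv (by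
      simp only [id, one_smul, add_smul]
      abel)
  refine ((((hasDerivAt_pow 2 t).mul hF).add (hw.norm_sq.div_const 2)).add
    (hu.norm_sq.const_mul (d / 2))).congr_deriv ?_
  simp only [energyDeriv]
  push_cast
  ring

theorem energy_dissipation [CompleteSpace H] {Φ : H → ℝ} (hΦ : ConvexOn ℝ univ Φ) (xstar : H)
    {x : ℝ → H} {α p c d t : ℝ} (hΦx : DifferentiableAt ℝ Φ (x t)) (ht : t ≠ 0)
    (hode : deriv (deriv x) t + (α / t) • deriv x t + gradient Φ (x t) = 0)
    (hp : p ≤ 1) (hc : 0 ≤ c) (hcα : c ≤ α - (p + 1) / 2) (hd : d = c * (α - p - c)) :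
    (p - 1) * energy Φ xstar x c d t + t * energyDeriv Φ xstar x c d t
      + (c - p - 1) * t ^ 2 * (Φ (x t) - Φ xstar) ≤ 0 := by
  have hF : Φ (x t) - Φ xstar ≤ ⟪gradient Φ (x t), x t - xstar⟫ := by
    have := hΦ.inner_le_sub_of_hasGradientAt hΦx.hasGradientAt xstar
    rw [← neg_sub, inner_neg_right] at this
    linarith
  have hacc : t • deriv (deriv x) t = -(α • deriv x t) - t • gradient Φ (x t) := by
    have h := congrArg (t • ·) hode
    simp only [smul_add, smul_smul, mul_div_cancel₀ α ht, smul_zero] at h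
    linear_combination (norm := module) h
  have key : (p - 1) * energy Φ xstar x c d t + t * energyDeriv Φ xstar x c d t
      + (c - p - 1) * t ^ 2 * (Φ (x t) - Φ xstar)
      = (p - 1) / 2 * c * (α - p) * ‖x t - xstar‖ ^ 2
        + ((p - 1) / 2 + c + 1 - α) * t ^ 2 * ‖deriv x t‖ ^ 2
        + c * t ^ 2 * (Φ (x t) - Φ xstar - ⟪gradient Φ (x t), x t - xstar⟫) := by
    simp only [energy, energyDeriv, inner_add_right, hacc]
    generalize x t - xstar = u
    generalize deriv x t = v
    generalize gradient Φ (x t) = g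
    simp only [← real_inner_self_eq_norm_sq, inner_add_left, inner_add_right, inner_sub_right,
      inner_neg_right, real_inner_smul_left, real_inner_smul_right, real_inner_comm v u,
      real_inner_comm v g, real_inner_comm u g, hd]
    ring
  rw [key]
  have hdist : (p - 1) / 2 * c * (α - p) * ‖x t - xstar‖ ^ 2 ≤ 0 :=
    mul_nonpos_of_nonpos_of_nonneg (mul_nonpos_of_nonpos_of_nonneg
      (mul_nonpos_of_nonpos_of_nonneg (by linarith) hc) (by linarith)) (sq_nonneg _)
  have hkin : ((p - 1) / 2 + c + 1 - α) * t ^ 2 * ‖deriv x t‖ ^ 2 ≤ 0 :=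
    mul_nonpos_of_nonpos_of_nonneg
      (mul_nonpos_of_nonpos_of_nonneg (by linarith) (sq_nonneg t)) (sq_nonneg _)
  have hgap : c * t ^ 2 * (Φ (x t) - Φ xstar - ⟪gradient Φ (x t), x t - xstar⟫) ≤ 0 :=
    mul_nonpos_of_nonneg_of_nonpos (mul_nonneg hc (sq_nonneg t)) (by linarith)
  linarith [hdist, hkin, hgap]

theorem integrableOn_rpow_mul_sub [CompleteSpace H] {Φ : H → ℝ} (hΦ : ConvexOn ℝ univ Φ)
    (hΦd : Differentiable ℝ Φ) {xstar : H} (hxstar : ∀ y, Φ xstar ≤ Φ y) {α t₀ : ℝ}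
    (hα : 0 < α) (ht₀ : 0 < t₀) {x : ℝ → H} (hx : ContDiff ℝ 2 x)
    (hode : ∀ t, t₀ ≤ t → deriv (deriv x) t + (α / t) • deriv x t + gradient Φ (x t) = 0)
    {p : ℝ} (hp1 : p ≤ 1) (hp : p < 2 * α / 3 - 1) :
    IntegrableOn (fun t => t ^ p * (Φ (x t) - Φ xstar)) (Ioi t₀) := by
  set c := α - (p + 1) / 2 with hc_def
  set d := c * (α - p - c)
  have hc : 0 ≤ c := by
    rcases le_or_gt (p + 1) 0 with h | h <;> linarith
  have hd : 0 ≤ d := mul_nonneg hc (by linarith)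
  have hpos : ∀ t ∈ Ici t₀, 0 < t := fun t ht => ht₀.trans_le ht
  have hx1 : Differentiable ℝ x := hx.differentiable two_ne_zero
  have hF : Continuous fun t => Φ (x t) - Φ xstar :=
    (hΦd.continuous.comp hx1.continuous).sub continuous_const
  refine integrableOn_Ioi_of_hasDerivAt_add_le (m := c - p - 1)
    (E := fun t => t ^ (p - 1) * energy Φ xstar x c d t)
    (E' := fun t => (p - 1) * t ^ (p - 1 - 1) * energy Φ xstar x c d t
      + t ^ (p - 1) * energyDeriv Φ xstar x c d t) (by linarith) ?_ ?_ ?_ ?_ ?_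
  · exact fun t ht => ((Real.continuousAt_rpow_const t p (Or.inl (hpos t ht).ne')).mul
      hF.continuousAt).continuousWithinAt
  · exact fun t ht => mul_nonneg (Real.rpow_nonneg (hpos t ht).le p) (sub_nonneg.2 (hxstar _))
  · exact fun t ht => (Real.hasDerivAt_rpow_const (Or.inl (hpos t ht).ne')).mul
      (hasDerivAt_energy xstar c d (hΦd _) (hx1 t) (hx.differentiable_deriv_two t))
  · exact fun t ht => mul_nonneg (Real.rpow_nonneg (hpos t ht).le _) (energy_nonneg hxstar x hd c t)
  · intro t ht
    have ht0 : 0 < t := hpos t (mem_Ici.2 ht.out.le)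
    have e1 : t ^ (p - 1) = t ^ (p - 1 - 1) * t := by
      rw [← Real.rpow_add_one ht0.ne', sub_add_cancel]
    have e2 : t ^ p = t ^ (p - 1 - 1) * t ^ 2 := by
      rw [← Real.rpow_natCast, ← Real.rpow_add ht0]; ring_nf
    calc _ = t ^ (p - 1 - 1) * ((p - 1) * energy Φ xstar x c d t
          + t * energyDeriv Φ xstar x c d t + (c - p - 1) * t ^ 2 * (Φ (x t) - Φ xstar)) := by
          rw [e1, e2]; ring
      _ ≤ 0 := mul_nonpos_of_nonneg_of_nonpos (Real.rpow_nonneg ht0.le _)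
          (energy_dissipation hΦ xstar (hΦd _) ht0.ne' (hode t ht.out.le) hp1 hc le_rfl rfl)

end AVD

end

/-- integral estimates of the values along trajectories of `(AVD)_α`:
if `α > 3` then `∫_{t₀}^∞ t (Φ(x(t)) - inf Φ) dt < ∞`; if `α ≤ 3` then
`∫_{t₀}^∞ t^p (Φ(x(t)) - inf Φ) dt < ∞` for every `p < 2α/3 - 1`. -/
theorem stmt_2
    {H : Type*} [NormedAddCommGroup H] [InnerProductSpace ℝ H] [CompleteSpace H]
    (Φ : H → ℝ) (hΦconv : ConvexOn ℝ Set.univ Φ) (hΦC1 : ContDiff ℝ 1 Φ)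
    (xstar : H) (hxstar : ∀ y : H, Φ xstar ≤ Φ y)
    (α t₀ : ℝ) (hα0 : 0 < α) (ht₀ : 0 < t₀)
    (x : ℝ → H) (hx : ContDiff ℝ 2 x)
    (hode : ∀ t : ℝ, t₀ ≤ t →
      deriv (deriv x) t + (α / t) • deriv x t + gradient Φ (x t) = 0) :
    (3 < α → MeasureTheory.IntegrableOn
        (fun t : ℝ => t * (Φ (x t) - Φ xstar)) (Set.Ioi t₀)) ∧
    (α ≤ 3 → ∀ p : ℝ, p < 2 * α / 3 - 1 → MeasureTheory.IntegrableOn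
        (fun t : ℝ => t ^ p * (Φ (x t) - Φ xstar)) (Set.Ioi t₀)) := by
  have hΦd : Differentiable ℝ Φ := hΦC1.differentiable one_ne_zero
  refine ⟨fun hα3 => ?_, fun hα3 p hp =>
    AVD.integrableOn_rpow_mul_sub hΦconv hΦd hxstar hα0 ht₀ hx hode (by linarith) hp⟩
  simpa using AVD.integrableOn_rpow_mul_sub hΦconv hΦd hxstar hα0 ht₀ hx hode (p := 1) le_rfl
    (by linarith)
end

section
/- Suppose α > 3. Then the speed decays faster than 1/t: ‖ẋ(t)‖ = o(1/t) as t → +∞, i.e. t·‖ẋ(t)‖ → 0 as t → +∞. -/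
/-!
With `λ = (α + 1) / 2`, the Lyapunov function
`E(t) = t² (Φ(x t) - Φ x⋆) + ½ ‖λ (x t - x⋆) + t ẋ(t)‖² + ½ λ (α - 1 - λ) ‖x t - x⋆‖²`
is nonnegative for `α ≥ 3`, and the equation together with the convexity inequality
`Φ(x t) - Φ x⋆ ≤ ⟪∇Φ(x t), x t - x⋆⟫` gives `E' ≤ -((α - 3) / 2) t W(t)`, where
`W = Φ(x) - Φ x⋆ + ½ ‖ẋ‖²` is the energy. So `t W(t)` is integrable on `(t₀, ∞)`.
Since `W' = -(α / t) ‖ẋ‖²`, the function `p(t) = t² W(t)` satisfies `p' ≤ 2 t W`, an integrable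
bound, so `p` converges; its limit is `0` because `p(t) / t = t W(t)` is integrable whereas `1 / t`
is not. Finally `t² ‖ẋ‖² ≤ 2 p(t)`.
-/

open Set Filter MeasureTheory
open scoped Topology RealInnerProductSpace

theorem HasGradientAt.hasDerivAt_comp {H : Type*} [NormedAddCommGroup H] [InnerProductSpace ℝ H]
    [CompleteSpace H] {Φ : H → ℝ} {x : ℝ → H} {g v : H} {t : ℝ}
    (hΦ : HasGradientAt Φ g (x t)) (hx : HasDerivAt x v t) :
    HasDerivAt (fun s => Φ (x s)) ⟪g, v⟫ t :=
  (hasGradientAt_iff_hasFDerivAt.mp hΦ).comp_hasDerivAt t hx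

theorem ConvexOn.add_inner_le_of_hasGradientAt {H : Type*} [NormedAddCommGroup H]
    [InnerProductSpace ℝ H] [CompleteSpace H] {Φ : H → ℝ} (hΦ : ConvexOn ℝ univ Φ) {g y : H}
    (hg : HasGradientAt Φ g y) (z : H) : Φ y + ⟪g, z - y⟫ ≤ Φ z := by
  have hline : ConvexOn ℝ univ (fun s : ℝ => Φ (y + s • (z - y))) := by
    simpa [AffineMap.lineMap_apply, Function.comp_def, add_comm] using
      hΦ.comp_affineMap (AffineMap.lineMap y z : ℝ →ᵃ[ℝ] H)
  have hderiv : HasDerivAt (fun s : ℝ => Φ (y + s • (z - y))) ⟪g, z - y⟫ 0 :=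
    HasGradientAt.hasDerivAt_comp (by simpa using hg)
      (by simpa using ((hasDerivAt_id (0 : ℝ)).smul_const (z - y)).const_add y)
  have := hline.le_slope_of_hasDerivAt (mem_univ 0) (mem_univ 1) one_pos hderiv
  simp only [slope_def_field, one_smul, add_sub_cancel, zero_smul, add_zero, sub_zero,
    div_one] at this
  linarith

section ImproperIntegral

variable {f f' g : ℝ → ℝ} {a : ℝ}

theorem antitoneOn_sub_intervalIntegral_of_hasDerivAt_le (hg : Continuous g)
    (hf : ∀ t ≥ a, HasDerivAt f (f' t) t) (hf'g : ∀ t ≥ a, f' t ≤ g t) :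
    AntitoneOn (fun t => f t - ∫ s in a..t, g s) (Ici a) := by
  have hG : ∀ t, HasDerivAt (fun t => ∫ s in a..t, g s) (g t) t := fun t =>
    intervalIntegral.integral_hasDerivAt_right (hg.intervalIntegrable _ _)
      (hg.stronglyMeasurableAtFilter _ _) hg.continuousAt
  refine antitoneOn_of_hasDerivWithinAt_nonpos (convex_Ici a) (f' := fun t => f' t - g t)
    (fun t ht => ((hf t ht).sub (hG t)).continuousAt.continuousWithinAt) (fun t ht => ?_)
    (fun t ht => ?_)
  · rw [interior_Ici] at ht
    exact ((hf t (le_of_lt ht)).sub (hG t)).hasDerivWithinAt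
  · rw [interior_Ici] at ht
    exact sub_nonpos.mpr (hf'g t (le_of_lt ht))

theorem integrableOn_Ioi_of_hasDerivAt_le_neg {E E' F : ℝ → ℝ} (hF : Continuous F)
    (hF₀ : ∀ t ≥ a, 0 ≤ F t) (hE₀ : ∀ t ≥ a, 0 ≤ E t) (hE : ∀ t ≥ a, HasDerivAt E (E' t) t)
    (hE'F : ∀ t ≥ a, E' t ≤ -F t) : IntegrableOn F (Ioi a) := by
  have hanti := antitoneOn_sub_intervalIntegral_of_hasDerivAt_le hF.neg hE hE'F
  refine integrableOn_Ioi_of_intervalIntegral_norm_bounded (E a) a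
    (fun _ => hF.integrableOn_Ioc) tendsto_id ?_
  filter_upwards [eventually_ge_atTop a] with T hT
  have hnorm : ∫ t in a..T, ‖F t‖ = ∫ t in a..T, F t :=
    intervalIntegral.integral_congr fun t ht => by
      rw [uIcc_of_le hT] at ht
      exact Real.norm_of_nonneg (hF₀ t ht.1)
  have := hanti (le_refl a) hT hT
  simp only [intervalIntegral.integral_same, Pi.neg_apply, intervalIntegral.integral_neg] at this
  rw [id, hnorm]
  linarith [hE₀ T hT]

theorem exists_tendsto_of_hasDerivAt_le_of_integrableOn (hg : Continuous g)
    (hgi : IntegrableOn g (Ioi a)) (hf₀ : ∀ t ≥ a, 0 ≤ f t) (hf : ∀ t ≥ a, HasDerivAt f (f' t) t)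
    (hf'g : ∀ t ≥ a, f' t ≤ g t) : ∃ L, Tendsto f atTop (𝓝 L) := by
  set h := fun t => f t - ∫ s in a..t, g s
  have hanti := antitoneOn_sub_intervalIntegral_of_hasDerivAt_le hg hf hf'g
  have hbound : ∀ t ≥ a, (∫ s in a..t, g s) ≤ ∫ s in Ioi a, ‖g s‖ := fun t ht =>
    calc (∫ s in a..t, g s) ≤ ∫ s in a..t, ‖g s‖ :=
          (le_abs_self _).trans (intervalIntegral.abs_integral_le_integral_abs ht)
      _ = ∫ s in Ioc a t, ‖g s‖ := intervalIntegral.integral_of_le ht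
      _ ≤ ∫ s in Ioi a, ‖g s‖ :=
          setIntegral_mono_set hgi.norm (ae_of_all _ fun _ => norm_nonneg _)
            Ioc_subset_Ioi_self.eventuallyLE
  obtain ⟨l, hl⟩ : ∃ l, Tendsto h atTop (𝓝 l) := by
    have hanti' : Antitone fun t => h (max t a) := fun s t hst =>
      hanti (le_max_right s a) (le_max_right t a) (max_le_max hst le_rfl)
    have hbdd : BddBelow (range fun t => h (max t a)) := by
      refine ⟨-∫ s in Ioi a, ‖g s‖, ?_⟩
      rintro _ ⟨t, rfl⟩
      linarith [hf₀ _ (le_max_right t a), hbound _ (le_max_right t a)]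
    refine ⟨_, (tendsto_atTop_ciInf hanti' hbdd).congr' ?_⟩
    filter_upwards [eventually_ge_atTop a] with t ht
    rw [max_eq_left ht]
  refine ⟨l + ∫ s in Ioi a, g s, (hl.add (intervalIntegral_tendsto_integral_Ioi a hgi
    tendsto_id)).congr fun t => ?_⟩
  simp [h]

theorem eq_zero_of_tendsto_of_integrableOn_div {p : ℝ → ℝ} {L : ℝ}
    (hp : Tendsto p atTop (𝓝 L)) (hpi : IntegrableOn (fun t => p t / t) (Ioi a)) : L = 0 := by
  by_contra hL
  have hL' : 0 < |L| := abs_pos.mpr hL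
  obtain ⟨T, hT⟩ := eventually_atTop.mp
    (hp.abs.eventually (eventually_ge_nhds (half_lt_self hL')))
  set b := max T (max a 1)
  have hb : 0 < b := lt_of_lt_of_le one_pos ((le_max_right a 1).trans (le_max_right _ _))
  refine not_integrableOn_Ioi_inv (a := b) ?_
  refine Integrable.mono' ((hpi.mono_set (Ioi_subset_Ioi ?_)).norm.const_mul (2 / |L|))
    measurable_inv.aestronglyMeasurable ((ae_restrict_iff' measurableSet_Ioi).mpr
      (ae_of_all _ fun t ht => ?_))
  · exact (le_max_left a 1).trans (le_max_right _ _)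
  have hpt : |L| / 2 ≤ |p t| := hT t ((le_max_left _ _).trans (le_of_lt ht))
  replace ht : 0 < t := hb.trans ht
  rw [norm_inv, Real.norm_eq_abs, Real.norm_eq_abs, abs_div, abs_of_pos ht]
  rw [inv_eq_one_div, div_le_iff₀ ht]
  calc (1 : ℝ) = 2 / |L| * (|L| / 2) := by field_simp
    _ ≤ 2 / |L| * |p t| := by gcongr
    _ = _ := by field_simp

end ImproperIntegral

section Trajectory

variable {H : Type*} [NormedAddCommGroup H] [InnerProductSpace ℝ H]
  {Φ : H → ℝ} {x : ℝ → H} {xstar : H} {α t₀ t : ℝ}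

noncomputable def energy (Φ : H → ℝ) (x : ℝ → H) (xstar : H) (t : ℝ) : ℝ :=
  Φ (x t) - Φ xstar + ‖deriv x t‖ ^ 2 / 2

noncomputable def lyapunov (Φ : H → ℝ) (x : ℝ → H) (xstar : H) (α t : ℝ) : ℝ :=
  t ^ 2 * (Φ (x t) - Φ xstar) + ‖((α + 1) / 2) • (x t - xstar) + t • deriv x t‖ ^ 2 / 2
    + (α + 1) * (α - 3) / 8 * ‖x t - xstar‖ ^ 2

theorem sq_norm_deriv_le_two_mul_energy (hxstar : ∀ y, Φ xstar ≤ Φ y) :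
    ‖deriv x t‖ ^ 2 ≤ 2 * energy Φ x xstar t := by
  unfold energy
  linarith [hxstar (x t)]

theorem energy_nonneg (hxstar : ∀ y, Φ xstar ≤ Φ y) : 0 ≤ energy Φ x xstar t := by
  linarith [sq_norm_deriv_le_two_mul_energy (x := x) (t := t) hxstar, sq_nonneg ‖deriv x t‖]

theorem continuous_energy (hΦ : Differentiable ℝ Φ) (hx : Differentiable ℝ x)
    (hx' : Differentiable ℝ (deriv x)) : Continuous (energy Φ x xstar) := by
  unfold energy
  exact ((hΦ.continuous.comp hx.continuous).sub continuous_const).add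
    ((hx'.continuous.norm.pow 2).div_const 2)

theorem lyapunov_nonneg (hα : 3 ≤ α) (hxstar : ∀ y, Φ xstar ≤ Φ y) :
    0 ≤ lyapunov Φ x xstar α t := by
  have hb : 0 ≤ Φ (x t) - Φ xstar := sub_nonneg.mpr (hxstar (x t))
  have hc : 0 ≤ (α + 1) * (α - 3) / 8 := by nlinarith
  unfold lyapunov
  positivity

variable [CompleteSpace H]

theorem hasDerivAt_energy (hΦ : Differentiable ℝ Φ) (hx : Differentiable ℝ x)
    (hx' : Differentiable ℝ (deriv x))
    (hode : deriv (deriv x) t + (α / t) • deriv x t + gradient Φ (x t) = 0) :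
    HasDerivAt (energy Φ x xstar) (-(α / t) * ‖deriv x t‖ ^ 2) t := by
  have hacc : deriv (deriv x) t = -(α / t) • deriv x t - gradient Φ (x t) := by
    rw [← sub_eq_zero, ← hode]; module
  refine ((((hΦ _).hasGradientAt.hasDerivAt_comp (hx t).hasDerivAt).sub_const (Φ xstar)).add
    ((hx' t).hasDerivAt.norm_sq.div_const 2)).congr_deriv ?_
  rw [hacc, inner_sub_right, real_inner_smul_right, real_inner_self_eq_norm_sq,
    real_inner_comm]
  ring

theorem hasDerivAt_sq_mul_energy (hΦ : Differentiable ℝ Φ)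
    (hx : Differentiable ℝ x) (hx' : Differentiable ℝ (deriv x))
    (hode : deriv (deriv x) t + (α / t) • deriv x t + gradient Φ (x t) = 0) :
    HasDerivAt (fun t => t ^ 2 * energy Φ x xstar t)
      (2 * (t * energy Φ x xstar t) - α * t * ‖deriv x t‖ ^ 2) t := by
  refine ((hasDerivAt_pow 2 t).mul (hasDerivAt_energy hΦ hx hx' hode)).congr_deriv ?_
  field_simp
  ring

theorem hasDerivAt_lyapunov (hΦ : Differentiable ℝ Φ) (hx : Differentiable ℝ x)
    (hx' : Differentiable ℝ (deriv x)) (ht : t ≠ 0)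
    (hode : deriv (deriv x) t + (α / t) • deriv x t + gradient Φ (x t) = 0) :
    HasDerivAt (lyapunov Φ x xstar α)
      (2 * t * (Φ (x t) - Φ xstar) - (α + 1) / 2 * t * ⟪gradient Φ (x t), x t - xstar⟫
        - (α - 3) / 2 * t * ‖deriv x t‖ ^ 2) t := by
  set g := gradient Φ (x t)
  set u := x t - xstar
  set v := deriv x t
  have hu : HasDerivAt (fun s => x s - xstar) v t := (hx t).hasDerivAt.sub_const xstar
  have hacc : t • deriv (deriv x) t = -α • v - t • g := by
    rw [← sub_eq_zero, ← smul_zero t, ← hode, smul_add, smul_add, smul_smul,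
      mul_div_cancel₀ α ht]
    module
  have hw : HasDerivAt (fun s => ((α + 1) / 2) • (x s - xstar) + s • deriv x s)
      (-((α - 3) / 2) • v - t • g) t := by
    refine ((hu.const_smul _).add ((hasDerivAt_id' t).smul (hx' t).hasDerivAt)).congr_deriv ?_
    rw [hacc]
    module
  have hb := (hasDerivAt_pow 2 t).mul
    (((hΦ _).hasGradientAt.hasDerivAt_comp (hx t).hasDerivAt).sub_const (Φ xstar))
  refine ((hb.add (hw.norm_sq.div_const 2)).add
    (hu.norm_sq.const_mul ((α + 1) * (α - 3) / 8))).congr_deriv ?_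
  simp only [u, v, g, inner_add_left, inner_sub_right, real_inner_smul_left,
    real_inner_smul_right, real_inner_self_eq_norm_sq,
    real_inner_comm (x t - xstar) (gradient Φ (x t)),
    real_inner_comm (deriv x t) (gradient Φ (x t))]
  ring

theorem integrableOn_mul_energy (hΦconv : ConvexOn ℝ univ Φ) (hΦ : Differentiable ℝ Φ)
    (hx : Differentiable ℝ x) (hx' : Differentiable ℝ (deriv x)) (hxstar : ∀ y, Φ xstar ≤ Φ y)
    (hα : 3 < α) (ht₀ : 0 < t₀)
    (hode : ∀ t, t₀ ≤ t → deriv (deriv x) t + (α / t) • deriv x t + gradient Φ (x t) = 0) :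
    IntegrableOn (fun t => t * energy Φ x xstar t) (Ioi t₀) := by
  have hc : 0 < (α - 3) / 2 := by linarith
  have hdecay : IntegrableOn (fun t => (α - 3) / 2 * (t * energy Φ x xstar t)) (Ioi t₀) := by
    refine integrableOn_Ioi_of_hasDerivAt_le_neg
      (continuous_const.mul (continuous_id.mul (continuous_energy hΦ hx hx')))
      (fun t ht => ?_) (fun t _ => lyapunov_nonneg hα.le hxstar)
      (fun t ht => hasDerivAt_lyapunov hΦ hx hx' (ht₀.trans_le ht).ne' (hode t ht))
      (fun t ht => ?_)
    · exact mul_nonneg hc.le (mul_nonneg (ht₀.le.trans ht) (energy_nonneg hxstar))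
    · have ht : 0 ≤ t := ht₀.le.trans ht
      have hgrad : Φ (x t) - Φ xstar ≤ ⟪gradient Φ (x t), x t - xstar⟫ := by
        have := hΦconv.add_inner_le_of_hasGradientAt (hΦ (x t)).hasGradientAt xstar
        rw [inner_sub_right] at this ⊢
        linarith
      have h₁ := mul_le_mul_of_nonneg_left hgrad (by positivity : 0 ≤ (α + 1) / 2 * t)
      have h₂ : 0 ≤ (α - 3) / 2 * t * ‖deriv x t‖ ^ 2 := by positivity
      unfold energy
      linarith
  exact IntegrableOn.congr_fun (hdecay.const_mul ((α - 3) / 2)⁻¹)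
    (fun _ _ => inv_mul_cancel_left₀ hc.ne' _) measurableSet_Ioi

theorem tendsto_sq_mul_energy (hΦconv : ConvexOn ℝ univ Φ) (hΦ : Differentiable ℝ Φ)
    (hx : Differentiable ℝ x) (hx' : Differentiable ℝ (deriv x)) (hxstar : ∀ y, Φ xstar ≤ Φ y)
    (hα : 3 < α) (ht₀ : 0 < t₀)
    (hode : ∀ t, t₀ ≤ t → deriv (deriv x) t + (α / t) • deriv x t + gradient Φ (x t) = 0) :
    Tendsto (fun t => t ^ 2 * energy Φ x xstar t) atTop (𝓝 0) := by
  have hW := integrableOn_mul_energy hΦconv hΦ hx hx' hxstar hα ht₀ hode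
  obtain ⟨L, hL⟩ := exists_tendsto_of_hasDerivAt_le_of_integrableOn
    (g := fun t => 2 * (t * energy Φ x xstar t))
    (continuous_const.mul (continuous_id.mul (continuous_energy hΦ hx hx'))) (hW.const_mul 2)
    (fun t _ => mul_nonneg (sq_nonneg t) (energy_nonneg hxstar))
    (fun t ht => hasDerivAt_sq_mul_energy hΦ hx hx' (hode t ht))
    (fun t ht => sub_le_self _ (by have := ht₀.trans_le ht; positivity))
  have hL₀ : L = 0 := eq_zero_of_tendsto_of_integrableOn_div hL
    (hW.congr_fun (fun t ht => by field_simp [(ht₀.trans ht).ne']) measurableSet_Ioi)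
  rwa [hL₀] at hL

end Trajectory

/-- for `α > 3`, the speed of any trajectory of `(AVD)_α` satisfies
`‖ẋ(t)‖ = o(1/t)`, i.e. `t ‖ẋ(t)‖ → 0` as `t → ∞`. -/
theorem stmt_5
    {H : Type*} [NormedAddCommGroup H] [InnerProductSpace ℝ H] [CompleteSpace H]
    (Φ : H → ℝ) (hΦconv : ConvexOn ℝ Set.univ Φ) (hΦC1 : ContDiff ℝ 1 Φ)
    (xstar : H) (hxstar : ∀ y : H, Φ xstar ≤ Φ y)
    (α t₀ : ℝ) (hα : 3 < α) (ht₀ : 0 < t₀)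
    (x : ℝ → H) (hx : ContDiff ℝ 2 x)
    (hode : ∀ t : ℝ, t₀ ≤ t →
      deriv (deriv x) t + (α / t) • deriv x t + gradient Φ (x t) = 0) :
    Filter.Tendsto (fun t : ℝ => t * ‖deriv x t‖) Filter.atTop (nhds 0) := by
  have hp := tendsto_sq_mul_energy hΦconv (hΦC1.differentiable one_ne_zero)
    (hx.differentiable two_ne_zero) hx.differentiable_deriv_two hxstar hα ht₀ hode
  refine squeeze_zero' ((eventually_ge_atTop 0).mono fun t ht => by positivity)
    (Eventually.of_forall fun t => Real.le_sqrt_of_sq_le ?_)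
    (show Tendsto (fun t => √(2 * (t ^ 2 * energy Φ x xstar t))) atTop (𝓝 0) by
      simpa using (hp.const_mul 2).sqrt)
  calc (t * ‖deriv x t‖) ^ 2 = t ^ 2 * ‖deriv x t‖ ^ 2 := by ring
    _ ≤ t ^ 2 * (2 * energy Φ x xstar t) := by
      gcongr
      exact sq_norm_deriv_le_two_mul_energy hxstar
    _ = 2 * (t ^ 2 * energy Φ x xstar t) := by ring
end

section
/- Suppose 1 ≤ α ≤ 3. Then for every real p with p < (α − 1)/2, the speed satisfies ‖ẋ(t)‖ = O(1/t^p) as t → +∞, i.e. there exists M ≥ 0 with ‖ẋ(t)‖ ≤ M/t^p for all t ≥ t₀. -/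
/-!
With `z = x - x⋆` and `w = 2p z + t ẋ`, the function
`E_p(t) = t^(2p-2) (t² (Φ(x) - Φ(x⋆)) + ‖w‖²/2 + p(α+1-4p) ‖z‖²)`
is nonincreasing whenever `0 ≤ p ≤ 1` and `3p ≤ α`: along `(AVD)_α` its derivative is
`-t^(2p-3)` times a sum of three nonnegative terms, the first being `2p t²` times the gap in the
first-order convexity inequality `Φ(x) - Φ(x⋆) ≤ ⟪x - x⋆, ∇Φ(x)⟫`. Since `t ẋ = w - 2p z`, the
quantity `t^(2p) ‖ẋ‖²` is bounded by a multiple of `E_p`, hence by a multiple of `E_p(t₀)`.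
Negative exponents follow from `p = 0`, where `E_0 = Φ(x) - Φ(x⋆) + ‖ẋ‖²/2` is the energy.
-/

open Set
open scoped RealInnerProductSpace Gradient

section Gradient

variable {H : Type*} [NormedAddCommGroup H] [InnerProductSpace ℝ H] [CompleteSpace H]

theorem DifferentiableAt.hasDerivAt_comp_inner_gradient {Φ : H → ℝ} {c : ℝ → H} {c' : H}
    {t : ℝ} (hΦ : DifferentiableAt ℝ Φ (c t)) (hc : HasDerivAt c c' t) :
    HasDerivAt (fun s => Φ (c s)) ⟪∇ Φ (c t), c'⟫ t := by
  simpa [Function.comp_def] using hΦ.hasFDerivAt.comp_hasDerivAt t hc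

theorem ConvexOn.add_inner_gradient_le {Φ : H → ℝ} {s : Set H} (hΦ : ConvexOn ℝ s Φ)
    {y w : H} (hy : y ∈ s) (hw : w ∈ s) (hΦy : DifferentiableAt ℝ Φ y) :
    Φ y + ⟪∇ Φ y, w - y⟫ ≤ Φ w := by
  have hline : HasDerivAt (fun r : ℝ => Φ (AffineMap.lineMap y w r)) ⟪∇ Φ y, w - y⟫ 0 := by
    have hΦy' : DifferentiableAt ℝ Φ (AffineMap.lineMap y w (0 : ℝ)) := by simpa using hΦy
    simpa using hΦy'.hasDerivAt_comp_inner_gradient AffineMap.hasDerivAt_lineMap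
  have := (hΦ.comp_affineMap (AffineMap.lineMap y w)).le_slope_of_hasDerivAt
    (by simpa using hy) (by simpa using hw) one_pos hline
  rw [slope_def_field] at this
  simp only [Function.comp_apply, AffineMap.lineMap_apply_one, AffineMap.lineMap_apply_zero,
    sub_zero, div_one] at this
  linarith

end Gradient

theorem le_div_rpow_of_le_div_rpow {f : ℝ → ℝ} {t₀ p q M : ℝ} (ht₀ : 0 < t₀) (hpq : p ≤ q)
    (hM : 0 ≤ M) (h : ∀ t ≥ t₀, f t ≤ M / t ^ q) :
    ∀ t ≥ t₀, f t ≤ M * t₀ ^ (p - q) / t ^ p := by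
  intro t ht
  have htpos : 0 < t := ht₀.trans_le ht
  calc f t ≤ M / t ^ q := h t ht
    _ = M * t ^ (p - q) / t ^ p := by
      rw [Real.rpow_sub htpos]; field_simp
    _ ≤ M * t₀ ^ (p - q) / t ^ p := by
      gcongr M * ?_ / _
      exact Real.rpow_le_rpow_of_nonpos ht₀ ht (sub_nonpos.2 hpq)

namespace AVD

variable {H : Type*} [NormedAddCommGroup H] [InnerProductSpace ℝ H]

/-- The coefficient `p(α+1-4p)` is the one for which the cross terms `⟪x - x⋆, ẋ⟫` cancel in the
derivative along `(AVD)_α`. -/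
noncomputable def lyapunov (Φ : H → ℝ) (x v : ℝ → H) (xstar : H) (α p t : ℝ) : ℝ :=
  t ^ (2 * p - 2) * (t ^ 2 * (Φ (x t) - Φ xstar) + ‖(2 * p) • (x t - xstar) + t • v t‖ ^ 2 / 2
    + p * (α + 1 - 4 * p) * ‖x t - xstar‖ ^ 2)

variable {Φ : H → ℝ} {x v : ℝ → H} {xstar : H} {α p t t₀ : ℝ}

theorem rpow_mul_norm_sq_le_lyapunov (hmin : ∀ y, Φ xstar ≤ Φ y) (hp₀ : 0 ≤ p)
    (hpα : 4 * p < α + 1) (ht : 0 < t) :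
    t ^ (2 * p) * ‖v t‖ ^ 2 ≤ (4 + 8 * p / (α + 1 - 4 * p)) * lyapunov Φ x v xstar α p t := by
  set z := x t - xstar
  set w := (2 * p) • z + t • v t
  have hc : 0 < α + 1 - 4 * p := by linarith
  have hq : 0 ≤ 8 * p / (α + 1 - 4 * p) := by positivity
  have hqc : 8 * p / (α + 1 - 4 * p) * (p * (α + 1 - 4 * p)) = 8 * p ^ 2 := by
    rw [mul_comm p, ← mul_assoc, div_mul_cancel₀ _ hc.ne']; ring
  have hv : t ^ 2 * ‖v t‖ ^ 2 ≤ 2 * ‖w‖ ^ 2 + 8 * p ^ 2 * ‖z‖ ^ 2 := by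
    have hpar := parallelogram_law_with_norm ℝ w ((2 * p) • z)
    have hw : w - (2 * p) • z = t • v t := by simp only [w]; abel
    rw [hw, norm_smul, norm_smul, Real.norm_of_nonneg ht.le,
      Real.norm_of_nonneg (by linarith)] at hpar
    nlinarith [norm_nonneg (w + (2 * p) • z)]
  have hΦ := sub_nonneg.2 (hmin (x t))
  have hpow : t ^ (2 * p) = t ^ (2 * p - 2) * t ^ 2 := by
    rw [← Real.rpow_natCast, ← Real.rpow_add ht]; norm_num
  calc t ^ (2 * p) * ‖v t‖ ^ 2 = t ^ (2 * p - 2) * (t ^ 2 * ‖v t‖ ^ 2) := by rw [hpow]; ring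
    _ ≤ t ^ (2 * p - 2) * ((4 + 8 * p / (α + 1 - 4 * p)) * (t ^ 2 * (Φ (x t) - Φ xstar)
          + ‖w‖ ^ 2 / 2 + p * (α + 1 - 4 * p) * ‖z‖ ^ 2)) := by
      gcongr t ^ (2 * p - 2) * ?_
      nlinarith [mul_nonneg (by positivity : (0:ℝ) ≤ 4 + 8 * p / (α + 1 - 4 * p))
        (mul_nonneg (sq_nonneg t) hΦ), mul_nonneg hq (sq_nonneg ‖w‖),
        mul_nonneg (mul_nonneg hp₀ hc.le) (sq_nonneg ‖z‖)]
    _ = _ := by rw [lyapunov]; ring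

variable [CompleteSpace H]

theorem hasDerivAt_lyapunov (ht : 0 < t) (hΦ : DifferentiableAt ℝ Φ (x t))
    (hx : HasDerivAt x (v t) t) (hv : HasDerivAt v (-(α / t) • v t - ∇ Φ (x t)) t) :
    HasDerivAt (lyapunov Φ x v xstar α p)
      (-t ^ (2 * p - 3) * (2 * p * t ^ 2 * (⟪x t - xstar, ∇ Φ (x t)⟫ - (Φ (x t) - Φ xstar))
        + (α - 3 * p) * t ^ 2 * ‖v t‖ ^ 2
        + 2 * p * (1 - p) * (α + 1 - 2 * p) * ‖x t - xstar‖ ^ 2)) t := by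
  have hz : HasDerivAt (fun s => x s - xstar) (v t) t := hx.sub_const xstar
  have hw := (hz.fun_const_smul (2 * p)).fun_add ((hasDerivAt_id' t).fun_smul hv)
  have hG := (((hasDerivAt_pow 2 t).fun_mul ((hΦ.hasDerivAt_comp_inner_gradient hx).sub_const
    (Φ xstar))).fun_add (hw.norm_sq.div_const 2)).fun_add
    (hz.norm_sq.const_mul (p * (α + 1 - 4 * p)))
  refine ((Real.hasDerivAt_rpow_const (p := 2 * p - 2) (Or.inl ht.ne')).fun_mul hG).congr_deriv ?_
  have hpow : t ^ (2 * p - 2) = t ^ (2 * p - 3) * t := by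
    rw [← Real.rpow_add_one ht.ne']; ring_nf
  set z := x t - xstar
  set u := v t
  set g := ∇ Φ (x t)
  simp only [one_smul, hpow, show 2 * p - 2 - 1 = 2 * p - 3 by ring, smul_sub,
    ← real_inner_self_eq_norm_sq, inner_add_left, inner_add_right, inner_sub_right,
    real_inner_smul_left, real_inner_smul_right, real_inner_comm z u,
    real_inner_comm u g]
  field_simp
  ring

theorem antitoneOn_lyapunov (hΦc : ConvexOn ℝ univ Φ) (hΦd : Differentiable ℝ Φ)
    (ht₀ : 0 < t₀) (hp₀ : 0 ≤ p) (hp₁ : p ≤ 1) (hpα : 3 * p ≤ α)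
    (hx : ∀ t ≥ t₀, HasDerivAt x (v t) t)
    (hv : ∀ t ≥ t₀, HasDerivAt v (-(α / t) • v t - ∇ Φ (x t)) t) :
    AntitoneOn (lyapunov Φ x v xstar α p) (Ici t₀) := by
  have hE (t : ℝ) (ht : t₀ ≤ t) := hasDerivAt_lyapunov (xstar := xstar) (p := p)
    (ht₀.trans_le ht) (hΦd _) (hx t ht) (hv t ht)
  refine antitoneOn_of_deriv_nonpos (convex_Ici t₀)
    (fun t ht => (hE t ht).continuousAt.continuousWithinAt)
    (fun t ht => (hE t (interior_subset ht)).differentiableAt.differentiableWithinAt)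
    fun t ht => ?_
  rw [interior_Ici] at ht
  rw [(hE t ht.le).deriv]
  have hconv : Φ (x t) - Φ xstar ≤ ⟪x t - xstar, ∇ Φ (x t)⟫ := by
    have := hΦc.add_inner_gradient_le (mem_univ (x t)) (mem_univ xstar) (hΦd _)
    rw [← neg_sub, inner_neg_right, real_inner_comm] at this
    linarith
  refine mul_nonpos_of_nonpos_of_nonneg (neg_nonpos.2 (Real.rpow_nonneg (ht₀.trans ht).le _)) ?_
  have hgap := sub_nonneg.2 hconv
  have hαp : 0 ≤ α - 3 * p := by linarith
  have hp₁' : 0 ≤ 1 - p := by linarith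
  have hαp' : 0 ≤ α + 1 - 2 * p := by linarith
  positivity

theorem exists_norm_le_div_rpow (hΦc : ConvexOn ℝ univ Φ) (hΦd : Differentiable ℝ Φ)
    (hmin : ∀ y, Φ xstar ≤ Φ y) (ht₀ : 0 < t₀) (hp₀ : 0 ≤ p) (hp₁ : p < 1) (hpα : 3 * p ≤ α)
    (hx : ∀ t ≥ t₀, HasDerivAt x (v t) t)
    (hv : ∀ t ≥ t₀, HasDerivAt v (-(α / t) • v t - ∇ Φ (x t)) t) :
    ∃ M, 0 ≤ M ∧ ∀ t ≥ t₀, ‖v t‖ ≤ M / t ^ p := by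
  set K := 4 + 8 * p / (α + 1 - 4 * p)
  refine ⟨√(K * lyapunov Φ x v xstar α p t₀), Real.sqrt_nonneg _, fun t ht => ?_⟩
  have htpos : 0 < t := ht₀.trans_le ht
  have hK : 0 ≤ K := by
    have : 0 < α + 1 - 4 * p := by linarith
    positivity
  rw [le_div_iff₀ (Real.rpow_pos_of_pos htpos p),
    ← Real.sqrt_sq (mul_nonneg (norm_nonneg _) (Real.rpow_nonneg htpos.le p))]
  refine Real.sqrt_le_sqrt ?_
  calc (‖v t‖ * t ^ p) ^ 2 = t ^ (2 * p) * ‖v t‖ ^ 2 := by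
        rw [mul_pow, ← Real.rpow_mul_natCast htpos.le]; ring_nf
    _ ≤ K * lyapunov Φ x v xstar α p t :=
        rpow_mul_norm_sq_le_lyapunov hmin hp₀ (by linarith) htpos
    _ ≤ K * lyapunov Φ x v xstar α p t₀ := by
        gcongr
        exact antitoneOn_lyapunov hΦc hΦd ht₀ hp₀ hp₁.le hpα hx hv self_mem_Ici ht ht

end AVD

/-- for `1 ≤ α ≤ 3`, the speed of any trajectory of `(AVD)_α`
satisfies `‖ẋ(t)‖ = O(1/t^p)` for every `p < (α-1)/2`. -/
theorem stmt_6
    {H : Type*} [NormedAddCommGroup H] [InnerProductSpace ℝ H] [CompleteSpace H]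
    (Φ : H → ℝ) (hΦconv : ConvexOn ℝ Set.univ Φ) (hΦC1 : ContDiff ℝ 1 Φ)
    (xstar : H) (hxstar : ∀ y : H, Φ xstar ≤ Φ y)
    (α t₀ : ℝ) (hα1 : 1 ≤ α) (hα3 : α ≤ 3) (ht₀ : 0 < t₀)
    (x : ℝ → H) (hx : ContDiff ℝ 2 x)
    (hode : ∀ t : ℝ, t₀ ≤ t →
      deriv (deriv x) t + (α / t) • deriv x t + gradient Φ (x t) = 0)
    (p : ℝ) (hp : p < (α - 1) / 2) :
    ∃ M : ℝ, 0 ≤ M ∧ ∀ t : ℝ, t₀ ≤ t → ‖deriv x t‖ ≤ M / t ^ p := by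
  obtain ⟨hxd, -, hx'⟩ := contDiff_succ_iff_deriv.mp (show ContDiff ℝ (1 + 1) x from hx)
  have hv (t : ℝ) (ht : t ≥ t₀) :
      HasDerivAt (deriv x) (-(α / t) • deriv x t - gradient Φ (x t)) t := by
    have h' : deriv (deriv x) t = -(α / t) • deriv x t - gradient Φ (x t) := by
      rw [← sub_eq_zero, ← hode t ht]; module
    exact h' ▸ ((hx'.differentiable one_ne_zero) t).hasDerivAt
  obtain ⟨M, hM, hbound⟩ := AVD.exists_norm_le_div_rpow (p := max p 0) hΦconv
    (hΦC1.differentiable one_ne_zero) hxstar ht₀ (le_max_right p 0)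
    (max_lt (by linarith) one_pos) (by rw [max_def]; split_ifs <;> linarith)
    (fun t _ => (hxd t).hasDerivAt) hv
  exact ⟨_, by positivity, le_div_rpow_of_le_div_rpow ht₀ (le_max_left p 0) hM hbound⟩
end

section
/- (Anchor inequality for the inertial forward-backward algorithm.) Under hypotheses (H), with α > 0, let (x_k) be generated by (IFB)_α, fix z ∈ argmin Θ, and set h_k := (1/2)‖x_k − z‖² and α_k := 1 − α/k. Then for every k ≥ 1: h_{k+1} − h_k − α_k(h_k − h_{k−1}) ≤ (1/2)(α_k² + α_k)‖x_k − x_{k−1}‖² − s·(Θ(x_{k+1}) − inf Θ). -/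
/-!
Writing `y = y_k`, `p = x_{k+1}` and `w = y - s ∇Φ(y)`, three inequalities add up to the basic
forward-backward estimate `s (Θ p - Θ z) ≤ ½‖z - y‖² - ½‖z - p‖²`: the descent lemma bounds
`Φ p` above around `y` (this is where `s L ≤ 1` enters), convexity bounds `Φ z` below around `y`,
and the variational inequality of the proximal step compares `Ψ p` with `Ψ z`; the gradient terms
cancel. Expanding `‖z - y_k‖²` with `y_k = x_k + α_k (x_k - x_{k-1})` then turns the right-hand
side into the anchor terms `h_k + α_k (h_k - h_{k-1}) - h_{k+1} + ½(α_k² + α_k)‖x_k - x_{k-1}‖²`.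
-/

open Set Filter Topology
open scoped RealInnerProductSpace

section Smooth

variable {H : Type*} [NormedAddCommGroup H] [InnerProductSpace ℝ H] [CompleteSpace H]
  {Φ : H → ℝ}

lemma Differentiable.hasDerivAt_comp_add_smul (hd : Differentiable ℝ Φ) (v d : H) (t : ℝ) :
    HasDerivAt (fun t : ℝ => Φ (v + t • d)) ⟪gradient Φ (v + t • d), d⟫ t := by
  rw [inner_gradient_left]
  have hline : HasDerivAt (fun t : ℝ => v + t • d) d t := by
    simpa using ((hasDerivAt_id t).smul_const d).const_add v
  exact (hd _).hasFDerivAt.comp_hasDerivAt t hline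

lemma ConvexOn.add_inner_gradient_le_s15 (hc : ConvexOn ℝ univ Φ) (hd : Differentiable ℝ Φ)
    (a b : H) : Φ a + ⟪gradient Φ a, b - a⟫ ≤ Φ b := by
  have hline : ConvexOn ℝ univ (fun t : ℝ => Φ (a + t • (b - a))) := by
    have hfun : (fun t : ℝ => Φ (a + t • (b - a))) = Φ ∘ AffineMap.lineMap a b := by
      funext t
      simp [AffineMap.lineMap_apply_module', add_comm]
    rw [hfun, ← preimage_univ]
    exact hc.comp_affineMap _
  have hderiv := hd.hasDerivAt_comp_add_smul a (b - a) 0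
  rw [zero_smul, add_zero] at hderiv
  have := hline.le_slope_of_hasDerivAt (mem_univ 0) (mem_univ 1) zero_lt_one hderiv
  simp only [slope_def_field, one_smul, zero_smul, add_zero, sub_zero, div_one,
    add_sub_cancel] at this
  linarith

lemma le_add_inner_gradient_add_sq_of_lipschitz (hd : Differentiable ℝ Φ) {L : ℝ}
    (hlip : ∀ u v : H, ‖gradient Φ u - gradient Φ v‖ ≤ L * ‖u - v‖) (v u : H) :
    Φ u ≤ Φ v + ⟪gradient Φ v, u - v⟫ + L / 2 * ‖u - v‖ ^ 2 := by
  set d := u - v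
  set g : ℝ → ℝ := fun t => Φ (v + t • d) - (t * ⟪gradient Φ v, d⟫ + L / 2 * ‖d‖ ^ 2 * t ^ 2)
  have hg : ∀ t, HasDerivAt g
      (⟪gradient Φ (v + t • d), d⟫ - (⟪gradient Φ v, d⟫ + L / 2 * ‖d‖ ^ 2 * (2 * t))) t := by
    intro t
    refine (hd.hasDerivAt_comp_add_smul v d t).sub ?_
    exact (((hasDerivAt_id t).mul_const ⟪gradient Φ v, d⟫).add
      ((hasDerivAt_pow 2 t).const_mul (L / 2 * ‖d‖ ^ 2))).congr_deriv (by simp)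
  have hanti : AntitoneOn g (Icc 0 1) := by
    refine antitoneOn_of_hasDerivWithinAt_nonpos (convex_Icc 0 1)
      (fun t _ => (hg t).continuousAt.continuousWithinAt) (fun t _ => (hg t).hasDerivWithinAt) ?_
    rw [interior_Icc]
    rintro t ⟨ht0, -⟩
    have hgrad : ⟪gradient Φ (v + t • d) - gradient Φ v, d⟫ ≤ L * (t * ‖d‖) * ‖d‖ := by
      calc _ ≤ ‖gradient Φ (v + t • d) - gradient Φ v‖ * ‖d‖ := real_inner_le_norm _ _
        _ ≤ L * ‖v + t • d - v‖ * ‖d‖ := by gcongr; exact hlip _ _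
        _ = L * (t * ‖d‖) * ‖d‖ := by simp [norm_smul, abs_of_pos ht0]
    rw [inner_sub_left] at hgrad
    linarith
  have h01 := hanti (left_mem_Icc.mpr zero_le_one) (right_mem_Icc.mpr zero_le_one) zero_le_one
  simp only [g, d, zero_smul, add_zero, one_smul, add_sub_cancel, zero_mul, one_mul, one_pow,
    mul_one] at h01
  linarith

end Smooth

section Prox

variable {H : Type*} [NormedAddCommGroup H]

/-- `p = prox_{γΨ} w`. -/
def IsProxPoint (Ψ : H → EReal) (γ : ℝ) (w p : H) : Prop :=
  ∀ ξ : H, Ψ p + ((1 / (2 * γ) * ‖p - w‖ ^ 2 : ℝ) : EReal) ≤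
    Ψ ξ + ((1 / (2 * γ) * ‖ξ - w‖ ^ 2 : ℝ) : EReal)

variable {Ψ : H → EReal} {γ : ℝ} {w p ξ : H}

lemma IsProxPoint.ne_top (hp : IsProxPoint Ψ γ w p) (hξ : Ψ ξ ≠ ⊤) : Ψ p ≠ ⊤ := by
  intro htop
  have := hp ξ
  rw [htop, EReal.top_add_coe, top_le_iff] at this
  exact EReal.add_ne_top hξ (EReal.coe_ne_top _) this

variable [InnerProductSpace ℝ H]

/-- Compare `p` with the points `p + t • (ξ - p)` of the segment `[p, ξ]` and let `t → 0⁺`. -/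
lemma IsProxPoint.toReal_le_add_inner
    (hΨconv : ∀ u v : H, ∀ a b : ℝ, 0 ≤ a → 0 ≤ b → a + b = 1 →
      Ψ (a • u + b • v) ≤ (a : EReal) * Ψ u + (b : EReal) * Ψ v)
    (hp : IsProxPoint Ψ γ w p) (hp_top : Ψ p ≠ ⊤) (hp_bot : Ψ p ≠ ⊥) (hξ_top : Ψ ξ ≠ ⊤)
    (hξ_bot : Ψ ξ ≠ ⊥) :
    (Ψ p).toReal ≤ (Ψ ξ).toReal + γ⁻¹ * ⟪ξ - p, p - w⟫ := by
  set c := 1 / (2 * γ)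
  have hc : γ⁻¹ = 2 * c := by
    simp only [c, one_div, mul_inv, ← mul_assoc, mul_inv_cancel₀ (two_ne_zero (α := ℝ)), one_mul]
  set ψp := (Ψ p).toReal
  set ψξ := (Ψ ξ).toReal
  set A := ψξ + γ⁻¹ * ⟪ξ - p, p - w⟫
  set B := c * ‖ξ - p‖ ^ 2
  have hsegment : ∀ t ∈ Ioc (0 : ℝ) 1, ψp ≤ A + t * B := by
    rintro t ⟨ht0, ht1⟩
    have hconv := hΨconv p ξ (1 - t) t (sub_nonneg.mpr ht1) ht0.le (sub_add_cancel 1 t)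
    have hchain := (hp ((1 - t) • p + t • ξ)).trans (add_le_add_left hconv _)
    rw [← EReal.coe_toReal hp_top hp_bot, ← EReal.coe_toReal hξ_top hξ_bot] at hchain
    have hreal : ψp + c * ‖p - w‖ ^ 2 ≤
        ((1 - t) * ψp + t * ψξ) + c * ‖(1 - t) • p + t • ξ - w‖ ^ 2 := by
      exact_mod_cast hchain
    have hexpand : ‖(1 - t) • p + t • ξ - w‖ ^ 2 =
        ‖p - w‖ ^ 2 + 2 * t * ⟪ξ - p, p - w⟫ + t ^ 2 * ‖ξ - p‖ ^ 2 := by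
      rw [show (1 - t) • p + t • ξ - w = (p - w) + t • (ξ - p) by module, norm_add_sq_real,
        real_inner_smul_right, norm_smul, mul_pow, Real.norm_eq_abs, sq_abs, real_inner_comm]
      ring
    rw [hexpand] at hreal
    have : t * ψp ≤ t * (A + t * B) := by
      simp only [A, B, hc]
      linarith
    exact le_of_mul_le_mul_left this ht0
  have hlim : Tendsto (fun t : ℝ => A + t * B) (𝓝[>] 0) (𝓝 A) := by
    have : Continuous fun t : ℝ => A + t * B := by fun_prop
    simpa using (this.tendsto 0).mono_left nhdsWithin_le_nhds
  exact ge_of_tendsto hlim (eventually_of_mem (Ioc_mem_nhdsGT zero_lt_one) hsegment)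

end Prox

section ForwardBackward

variable {H : Type*} [NormedAddCommGroup H] [InnerProductSpace ℝ H] [CompleteSpace H]
  {Φ : H → ℝ}

lemma forwardBackward_step_le (hc : ConvexOn ℝ univ Φ) (hd : Differentiable ℝ Φ) {L : ℝ}
    (hlip : ∀ u v : H, ‖gradient Φ u - gradient Φ v‖ ≤ L * ‖u - v‖) {s : ℝ} (hs : 0 < s)
    (hsL : s * L ≤ 1) {y p z : H} {ψp ψz : ℝ}
    (hprox : ψp ≤ ψz + s⁻¹ * ⟪z - p, p - (y - s • gradient Φ y)⟫) :
    s * ((Φ p + ψp) - (Φ z + ψz)) ≤ 1 / 2 * ‖z - y‖ ^ 2 - 1 / 2 * ‖z - p‖ ^ 2 := by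
  set g := gradient Φ y
  have hdescent := le_add_inner_gradient_add_sq_of_lipschitz hd hlip y p
  have hconvex := hc.add_inner_gradient_le_s15 hd y z
  have hprox' : s * ψp ≤ s * ψz + ⟪z - p, p - y⟫ + s * ⟪z - p, g⟫ := by
    have := mul_le_mul_of_nonneg_left hprox hs.le
    rwa [mul_add, ← mul_assoc, mul_inv_cancel₀ hs.ne', one_mul, sub_sub_eq_add_sub,
      add_sub_right_comm, inner_add_right, real_inner_smul_right, ← add_assoc] at this
  have hgrad : ⟪g, p - y⟫ - ⟪g, z - y⟫ + ⟪z - p, g⟫ = 0 := by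
    rw [real_inner_comm g (z - p), ← inner_sub_right, ← inner_add_right]
    simp
  have hsq : ‖z - y‖ ^ 2 = ‖z - p‖ ^ 2 + 2 * ⟪z - p, p - y⟫ + ‖p - y‖ ^ 2 := by
    rw [← norm_add_sq_real, sub_add_sub_cancel]
  have hquad : s * (L / 2 * ‖p - y‖ ^ 2) ≤ 1 / 2 * ‖p - y‖ ^ 2 := by
    nlinarith [sq_nonneg ‖p - y‖]
  linarith [mul_le_mul_of_nonneg_left hdescent hs.le, mul_le_mul_of_nonneg_left hconvex hs.le,
    mul_eq_zero_of_right s hgrad]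

omit [CompleteSpace H] in
lemma half_norm_sq_sub_inertial_sub (x x' z : H) (a : ℝ) :
    1 / 2 * ‖z - (x + a • (x - x'))‖ ^ 2 - 1 / 2 * ‖x - z‖ ^ 2
        - a * (1 / 2 * ‖x - z‖ ^ 2 - 1 / 2 * ‖x' - z‖ ^ 2) =
      1 / 2 * (a ^ 2 + a) * ‖x - x'‖ ^ 2 := by
  have hy : ‖z - (x + a • (x - x'))‖ ^ 2 =
      ‖x - z‖ ^ 2 + 2 * a * ⟪x - z, x - x'⟫ + a ^ 2 * ‖x - x'‖ ^ 2 := by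
    rw [show z - (x + a • (x - x')) = -((x - z) + a • (x - x')) by abel, norm_neg,
      norm_add_sq_real, real_inner_smul_right, norm_smul, mul_pow, Real.norm_eq_abs, sq_abs]
    ring
  have hx' : ‖x' - z‖ ^ 2 = ‖x - z‖ ^ 2 - 2 * ⟪x - z, x - x'⟫ + ‖x - x'‖ ^ 2 := by
    rw [show x' - z = (x - z) - (x - x') by abel, norm_sub_sq_real]
  rw [hy, hx']
  ring

end ForwardBackward

theorem stmt_15_general
    {H : Type*} [NormedAddCommGroup H] [InnerProductSpace ℝ H] [CompleteSpace H]
    (Φ : H → ℝ) (hΦconv : ConvexOn ℝ Set.univ Φ) (hΦdiff : Differentiable ℝ Φ)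
    (L : ℝ) (hL : 0 < L)
    (hlip : ∀ u v : H, ‖gradient Φ u - gradient Φ v‖ ≤ L * ‖u - v‖)
    (Ψ : H → EReal)
    (hΨbot : ∀ u : H, Ψ u ≠ ⊥) (hΨproper : ∃ u : H, Ψ u ≠ ⊤)
    (hΨconv : ∀ u v : H, ∀ a b : ℝ, 0 ≤ a → 0 ≤ b → a + b = 1 →
      Ψ (a • u + b • v) ≤ (a : EReal) * Ψ u + (b : EReal) * Ψ v)
    (Θ : H → EReal) (hΘ : ∀ u : H, Θ u = (Φ u : EReal) + Ψ u)
    (z : H) (hz : ∀ u : H, Θ z ≤ Θ u)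
    (s : ℝ) (hs : 0 < s) (hsL : s ≤ 1 / L)
    (prox : H → H)
    (hprox : ∀ w ξ : H,
      Ψ (prox w) + ((1 / (2 * s) * ‖prox w - w‖ ^ 2 : ℝ) : EReal) ≤
        Ψ ξ + ((1 / (2 * s) * ‖ξ - w‖ ^ 2 : ℝ) : EReal))
    (α : ℝ)
    (x y : ℕ → H)
    (hy : ∀ k : ℕ, 1 ≤ k → y k = x k + (1 - α / (k : ℝ)) • (x k - x (k - 1)))
    (hrec : ∀ k : ℕ, 1 ≤ k → x (k + 1) = prox (y k - s • gradient Φ (y k)))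
    (h : ℕ → ℝ) (hh : ∀ k : ℕ, h k = 1 / 2 * ‖x k - z‖ ^ 2) :
    ∀ k : ℕ, 1 ≤ k →
      ((h (k + 1) - h k - (1 - α / (k : ℝ)) * (h k - h (k - 1)) : ℝ) : EReal) ≤
        ((1 / 2 * ((1 - α / (k : ℝ)) ^ 2 + (1 - α / (k : ℝ)))
            * ‖x k - x (k - 1)‖ ^ 2 : ℝ) : EReal)
          - (s : EReal) * (Θ (x (k + 1)) - Θ z) := by
  intro k hk
  have hmin : IsProxPoint Ψ s (y k - s • gradient Φ (y k)) (x (k + 1)) := by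
    rw [hrec k hk]
    exact hprox _
  have hz_top : Ψ z ≠ ⊤ := by
    obtain ⟨u, hu⟩ := hΨproper
    have : Θ z < ⊤ := (hz u).trans_lt (by rw [hΘ]; exact EReal.add_lt_top (EReal.coe_ne_top _) hu)
    rw [hΘ] at this
    exact fun htop => by simp [htop] at this
  have hp_top := hmin.ne_top hz_top
  have hstep := forwardBackward_step_le hΦconv hΦdiff hlip hs ((le_div_iff₀ hL).mp hsL)
    (hmin.toReal_le_add_inner hΨconv hp_top (hΨbot _) hz_top (hΨbot z))
  have hinertial := half_norm_sq_sub_inertial_sub (x k) (x (k - 1)) z (1 - α / k)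
  rw [← hy k hk] at hinertial
  rw [hΘ, hΘ, ← EReal.coe_toReal hp_top (hΨbot _), ← EReal.coe_toReal hz_top (hΨbot z), hh, hh, hh,
    norm_sub_rev (x (k + 1))]
  norm_cast
  linarith

/-- anchor inequality for the inertial forward-backward algorithm
`(IFB)_α`. With `z ∈ argmin Θ`, `h_k = (1/2)‖x_k - z‖²` and `α_k = 1 - α/k`,
for every `k ≥ 1`:
`h_{k+1} - h_k - α_k (h_k - h_{k-1}) ≤ (1/2)(α_k² + α_k)‖x_k - x_{k-1}‖²
  - s (Θ(x_{k+1}) - min Θ)`. -/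
theorem stmt_15
    {H : Type*} [NormedAddCommGroup H] [InnerProductSpace ℝ H] [CompleteSpace H]
    (Φ : H → ℝ) (hΦconv : ConvexOn ℝ Set.univ Φ) (hΦdiff : Differentiable ℝ Φ)
    (L : ℝ) (hL : 0 < L)
    (hlip : ∀ u v : H, ‖gradient Φ u - gradient Φ v‖ ≤ L * ‖u - v‖)
    (Ψ : H → EReal)
    (hΨbot : ∀ u : H, Ψ u ≠ ⊥) (hΨproper : ∃ u : H, Ψ u ≠ ⊤)
    (hΨconv : ∀ u v : H, ∀ a b : ℝ, 0 ≤ a → 0 ≤ b → a + b = 1 →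
      Ψ (a • u + b • v) ≤ (a : EReal) * Ψ u + (b : EReal) * Ψ v)
    (hΨlsc : LowerSemicontinuous Ψ)
    (Θ : H → EReal) (hΘ : ∀ u : H, Θ u = (Φ u : EReal) + Ψ u)
    (z : H) (hz : ∀ u : H, Θ z ≤ Θ u)
    (s : ℝ) (hs : 0 < s) (hsL : s ≤ 1 / L)
    (prox : H → H)
    (hprox : ∀ w ξ : H,
      Ψ (prox w) + ((1 / (2 * s) * ‖prox w - w‖ ^ 2 : ℝ) : EReal) ≤
        Ψ ξ + ((1 / (2 * s) * ‖ξ - w‖ ^ 2 : ℝ) : EReal))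
    (α : ℝ) (hα : 0 < α)
    (x y : ℕ → H)
    (hy : ∀ k : ℕ, 1 ≤ k → y k = x k + (1 - α / (k : ℝ)) • (x k - x (k - 1)))
    (hrec : ∀ k : ℕ, 1 ≤ k → x (k + 1) = prox (y k - s • gradient Φ (y k)))
    (h : ℕ → ℝ) (hh : ∀ k : ℕ, h k = 1 / 2 * ‖x k - z‖ ^ 2) :
    ∀ k : ℕ, 1 ≤ k →
      ((h (k + 1) - h k - (1 - α / (k : ℝ)) * (h k - h (k - 1)) : ℝ) : EReal) ≤
        ((1 / 2 * ((1 - α / (k : ℝ)) ^ 2 + (1 - α / (k : ℝ)))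
            * ‖x k - x (k - 1)‖ ^ 2 : ℝ) : EReal)
          - (s : EReal) * (Θ (x (k + 1)) - Θ z) :=
  stmt_15_general Φ hΦconv hΦdiff L hL hlip Ψ hΨbot hΨproper hΨconv Θ hΘ z hz s hs hsL prox hprox α
    x y hy hrec h hh
end
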